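/- If τ = 1, then n = 2 and ω = 2. -/

import Mathlib

open Module

/-- The endomorphism `F - 1` of `N`. -/
def frobSub {N : Type*} [AddCommGroup N] (F : AddAut N) : N →+ N :=
  AddEquiv.toAddMonoidHom (F : N ≃+ N) - AddMonoidHom.id N

/-- The invariants `N^F = ker (F - 1)`. -/
def invariantsOf {N : Type*} [AddCommGroup N] (F : AddAut N) : AddSubgroup N :=
  (frobSub F).ker

/-- The coinvariants `N_F = N / im (F - 1)`. -/
abbrev coinvariantsOf {N : Type*} [AddCommGroup N] (F : AddAut N) :=
  N ⧸ (frobSub F).range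

/-- The map `β : N^F → N_F` induced by the identity of `N`. -/
def betaHom {N : Type*} [AddCommGroup N] (F : AddAut N) :
    ↥(invariantsOf F) →+ coinvariantsOf F :=
  (QuotientAddGroup.mk' (frobSub F).range).comp (invariantsOf F).subtype

/-- The cokernel of `β`. -/
abbrev betaCoker {N : Type*} [AddCommGroup N] (F : AddAut N) :=
  coinvariantsOf F ⧸ (betaHom F).range

/-- `ω = |coker β| / |ker β|`. -/
noncomputable def omegaOf {N : Type*} [AddCommGroup N] (F : AddAut N) : ℕ :=
  Nat.card (betaCoker F) / Nat.card ↥(betaHom F).ker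

/-- `τ = rank N - rank N^F`. -/
noncomputable def tauOf {N : Type*} [AddCommGroup N] (F : AddAut N) : ℕ :=
  Module.finrank ℤ N - Module.finrank ℤ ↥(invariantsOf F)

/-!
Since `N ⧸ N^F` embeds into `N` via `F - 1`, it is torsion-free of rank `τ = 1`, so `N^F` is the
kernel of a surjection `π : N → ℤ`, and `F` acts on `N ⧸ N^F ≅ ℤ` as a unit `±1`. If it acted
trivially, `F = 1 + D` with `D² = 0`, so `F^n = 1 + nD` and finite order forces `F = 1`,
contradicting `τ = 1`. Hence `π ∘ F = -π`, so `F + 1` lands in `N^F` and `F² = 1`, i.e. `n = 2`.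
Then `β` is injective (an invariant `x = Fy - y` satisfies `x = Fx = -x`), and `π` identifies
`coker β = N ⧸ ((F - 1)N + N^F)` with `ℤ ⧸ 2ℤ`, because `π ∘ (F - 1) = -2π`.
-/

theorem QuotientAddGroup.isAddTorsionFree_quotient_ker {G H : Type*} [AddCommGroup G]
    [AddGroup H] [IsAddTorsionFree H] (φ : G →+ H) : IsAddTorsionFree (G ⧸ φ.ker) :=
  (QuotientAddGroup.kerLift_injective φ).isAddTorsionFree (QuotientAddGroup.kerLift φ)

theorem AddSubgroup.exists_surjective_int_ker_eq {N : Type*} [AddCommGroup N]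
    [Module.Finite ℤ N] (H : AddSubgroup N) [IsAddTorsionFree (N ⧸ H)]
    (hrank : finrank ℤ N - finrank ℤ H = 1) :
    ∃ π : N →+ ℤ, Function.Surjective π ∧ π.ker = H := by
  have : IsAddTorsionFree (N ⧸ H.toIntSubmodule) := ‹IsAddTorsionFree (N ⧸ H)›
  obtain ⟨e⟩ := nonempty_linearEquiv_of_finrank_eq_one
    ((Submodule.finrank_quotient H.toIntSubmodule).trans hrank)
  refine ⟨e.symm.toAddMonoidHom.comp (QuotientAddGroup.mk' H),
    e.symm.surjective.comp (QuotientAddGroup.mk'_surjective H), ?_⟩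
  ext x
  change e.symm (Submodule.Quotient.mk x) = 0 ↔ x ∈ H
  rw [LinearEquiv.map_eq_zero_iff, Submodule.Quotient.mk_eq_zero]
  rfl

theorem AddMonoidHom.exists_eq_mul_of_ker_le {N : Type*} [AddCommGroup N] {π : N →+ ℤ}
    (hπ : Function.Surjective π) (g : N →+ ℤ) (hle : π.ker ≤ g.ker) :
    ∃ c : ℤ, ∀ x, g x = c * π x := by
  obtain ⟨u, hu⟩ := hπ 1
  refine ⟨g u, fun x => ?_⟩
  have hx : x - π x • u ∈ π.ker := by simp [hu]
  have hg := hle hx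
  rw [AddMonoidHom.mem_ker, map_sub, map_zsmul, smul_eq_mul, sub_eq_zero] at hg
  rw [hg, mul_comm]

section

variable {N : Type*} [AddCommGroup N] (F : AddAut N)

theorem frobSub_apply (x : N) : frobSub F x = F x - x := rfl

theorem mem_invariantsOf {x : N} : x ∈ invariantsOf F ↔ F x = x := by
  rw [invariantsOf, AddMonoidHom.mem_ker, frobSub_apply, sub_eq_zero]

theorem betaHom_eq_zero_iff (x : invariantsOf F) :
    betaHom F x = 0 ↔ (x : N) ∈ (frobSub F).range :=
  QuotientAddGroup.eq_zero_iff _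

theorem range_betaHom : (betaHom F).range =
    ((frobSub F).range ⊔ invariantsOf F).map (QuotientAddGroup.mk' (frobSub F).range) := by
  rw [betaHom, AddMonoidHom.range_comp, AddSubgroup.range_subtype, AddSubgroup.map_sup,
    QuotientAddGroup.map_mk'_self, bot_sup_eq]

theorem card_betaCoker :
    Nat.card (betaCoker F) = Nat.card (N ⧸ ((frobSub F).range ⊔ invariantsOf F)) := by
  rw [betaCoker, range_betaHom]
  exact Nat.card_congr (QuotientAddGroup.quotientQuotientEquivQuotient _ _ le_sup_left).toEquiv

variable {F}

theorem nsmul_apply_of_forall_frobSub_mem_invariantsOf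
    (h : ∀ x, frobSub F x ∈ invariantsOf F) (k : ℕ) (x : N) :
    (k • F) x = x + k • frobSub F x := by
  induction k with
  | zero => simp
  | succ k ih =>
    have hFx : F x = x + frobSub F x := by rw [frobSub_apply]; abel
    rw [succ_nsmul', AddAut.add_apply, ih, map_add, map_nsmul, (mem_invariantsOf F).mp (h x),
      hFx, succ_nsmul]
    abel

theorem eq_zero_of_forall_frobSub_mem_invariantsOf [IsAddTorsionFree N]
    (hF : IsOfFinAddOrder F) (h : ∀ x, frobSub F x ∈ invariantsOf F) : F = 0 := by
  obtain ⟨n, hn, hnF⟩ := isOfFinAddOrder_iff_nsmul_eq_zero.mp hF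
  ext x
  have hiter := nsmul_apply_of_forall_frobSub_mem_invariantsOf h n x
  rw [hnF, AddAut.zero_apply, left_eq_add, nsmul_eq_zero_iff_right hn.ne', frobSub_apply,
    sub_eq_zero] at hiter
  exact hiter

theorem two_nsmul_eq_zero_of_forall_add_mem_invariantsOf
    (h : ∀ x, F x + x ∈ invariantsOf F) : 2 • F = 0 := by
  ext x
  have hx := (mem_invariantsOf F).mp (h x)
  rw [map_add, add_comm] at hx
  rw [two_nsmul, AddAut.add_apply, AddAut.zero_apply]
  exact add_left_cancel hx

theorem apply_apply_of_two_nsmul_eq_zero (h : 2 • F = 0) (x : N) : F (F x) = x := by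
  simpa [two_nsmul] using DFunLike.congr_fun h x

theorem ker_betaHom_eq_bot [IsAddTorsionFree N] (h : 2 • F = 0) : (betaHom F).ker = ⊥ := by
  refine (AddSubgroup.eq_bot_iff_forall _).mpr fun x hx => Subtype.ext ?_
  obtain ⟨y, hy⟩ := (betaHom_eq_zero_iff F x).mp hx
  have hfix : F x = x := (mem_invariantsOf F).mp x.2
  have hanti : F x = -x := by
    rw [← hy, frobSub_apply, map_sub, apply_apply_of_two_nsmul_eq_zero h, neg_sub]
  exact self_eq_neg.mp (hfix.symm.trans hanti)

theorem ne_zero_of_ker_eq_invariantsOf {π : N →+ ℤ} (hπ : Function.Surjective π)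
    (hker : π.ker = invariantsOf F) : F ≠ 0 := by
  rintro rfl
  obtain ⟨u, hu⟩ := hπ 1
  have hu0 : u ∈ π.ker := hker ▸ (mem_invariantsOf 0).mpr rfl
  rw [AddMonoidHom.mem_ker, hu] at hu0
  exact one_ne_zero hu0

theorem apply_eq_neg_of_ker_eq_invariantsOf [IsAddTorsionFree N] (hF : IsOfFinAddOrder F)
    {π : N →+ ℤ} (hπ : Function.Surjective π) (hker : π.ker = invariantsOf F) (x : N) :
    π (F x) = -π x := by
  have hle : π.ker ≤ (π.comp F.toAddMonoidHom).ker := fun y hy => by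
    have hFy : F y = y := (mem_invariantsOf F).mp (hker ▸ hy)
    rwa [AddMonoidHom.mem_ker, AddMonoidHom.comp_apply, AddEquiv.coe_toAddMonoidHom, hFy]
  obtain ⟨c, hc⟩ := π.exists_eq_mul_of_ker_le hπ _ hle
  obtain ⟨y, hy⟩ := (hπ.comp F.surjective) 1
  have hunit : IsUnit c := IsUnit.of_mul_eq_one (π y) ((hc y).symm.trans hy)
  rcases Int.isUnit_iff.mp hunit with rfl | rfl
  · refine absurd (eq_zero_of_forall_frobSub_mem_invariantsOf hF fun z => ?_)
      (ne_zero_of_ker_eq_invariantsOf hπ hker)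
    rw [← hker, AddMonoidHom.mem_ker, frobSub_apply, map_sub, sub_eq_zero]
    simpa using hc z
  · simpa using hc x

theorem two_nsmul_eq_zero_of_apply_eq_neg {π : N →+ ℤ} (hker : π.ker = invariantsOf F)
    (hneg : ∀ x, π (F x) = -π x) : 2 • F = 0 :=
  two_nsmul_eq_zero_of_forall_add_mem_invariantsOf fun x => by
    rw [← hker, AddMonoidHom.mem_ker, map_add, hneg, neg_add_cancel]

theorem ker_intCast_comp_eq {π : N →+ ℤ} (hπ : Function.Surjective π)
    (hker : π.ker = invariantsOf F) (hneg : ∀ x, π (F x) = -π x) :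
    ((Int.castAddHom (ZMod 2)).comp π).ker = (frobSub F).range ⊔ invariantsOf F := by
  have hfrob : ∀ y, π (frobSub F y) = -(2 * π y) := fun y => by
    rw [frobSub_apply, map_sub, hneg]; ring
  apply le_antisymm
  · intro x hx
    obtain ⟨m, hm⟩ := (ZMod.intCast_zmod_eq_zero_iff_dvd _ 2).mp hx
    obtain ⟨y, hy⟩ := hπ m
    have hxy : x + frobSub F y ∈ invariantsOf F := by
      rw [← hker, AddMonoidHom.mem_ker, map_add, hfrob, hm, hy]
      push_cast
      ring
    rw [← add_sub_cancel_right x (frobSub F y)]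
    exact sub_mem (AddSubgroup.mem_sup_right hxy) (AddSubgroup.mem_sup_left ⟨y, rfl⟩)
  · refine sup_le ?_ fun x hx => ?_
    · rintro _ ⟨y, rfl⟩
      rw [AddMonoidHom.mem_ker, AddMonoidHom.comp_apply, hfrob]
      exact (ZMod.intCast_zmod_eq_zero_iff_dvd _ 2).mpr ⟨-π y, by ring⟩
    · rw [← hker, AddMonoidHom.mem_ker] at hx
      rw [AddMonoidHom.mem_ker, AddMonoidHom.comp_apply, hx, map_zero]

theorem omegaOf_eq_two [IsAddTorsionFree N] {π : N →+ ℤ} (hπ : Function.Surjective π)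
    (hker : π.ker = invariantsOf F) (hneg : ∀ x, π (F x) = -π x) : omegaOf F = 2 := by
  have hsurj : Function.Surjective ((Int.castAddHom (ZMod 2)).comp π) :=
    ZMod.intCast_surjective.comp hπ
  have hcoker : Nat.card (betaCoker F) = 2 := by
    rw [card_betaCoker, ← ker_intCast_comp_eq hπ hker hneg,
      Nat.card_congr (QuotientAddGroup.quotientKerEquivOfSurjective _ hsurj).toEquiv, Nat.card_zmod]
  rw [omegaOf, hcoker, ker_betaHom_eq_bot (two_nsmul_eq_zero_of_apply_eq_neg hker hneg)]
  simp

end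

/-- If `τ = 1`, then `n = 2` and `ω = 2`. -/
theorem omega_of_tau_eq_one {N : Type*} [AddCommGroup N]
    [Module.Free ℤ N] [Module.Finite ℤ N]
    (F : AddAut N) (n : ℕ) (hn : 1 ≤ n) (hord : addOrderOf F = n)
    (hτ : tauOf F = 1) :
    n = 2 ∧ omegaOf F = 2 := by
  have : IsAddTorsionFree N := .of_isTorsionFree ℤ N
  have : IsAddTorsionFree (N ⧸ invariantsOf F) :=
    QuotientAddGroup.isAddTorsionFree_quotient_ker (frobSub F)
  obtain ⟨π, hπ, hker⟩ := (invariantsOf F).exists_surjective_int_ker_eq hτ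
  have hneg := apply_eq_neg_of_ker_eq_invariantsOf (addOrderOf_pos_iff.mp (hord ▸ hn)) hπ hker
  refine ⟨?_, omegaOf_eq_two hπ hker hneg⟩
  rw [← hord]
  exact addOrderOf_eq_prime (two_nsmul_eq_zero_of_apply_eq_neg hker hneg)
    (ne_zero_of_ker_eq_invariantsOf hπ hker)
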